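/- Let 𝒜 be a reduced gST-automaton and let 𝒜⁺ be the gST-automaton obtained from 𝒜 by adding, for every accepting state p and initial state q with μ(p) ≅ μ(q), a transition from p to q labelled id_{μ(p)}, keeping the same states, initial states and accepting states. Then L(𝒜⁺) = L(𝒜)⁺ = ⋃_{n≥1} L(𝒜)ⁿ. -/

import Mathlib

open scoped Classical

namespace HDA

/-! ### Ipomsets over a fixed alphabet -/

structure PreIpomset (σ : Type) : Type 1 where
  carrier : Type
  fin : Finite carrier
  lt : carrier → carrier → Prop
  evord : carrier → carrier → Prop
  S : Set carrier
  T : Set carrier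
  lab : carrier → σ

namespace PreIpomset

variable {σ : Type}

/-- The precedence order is empty. -/
def Discrete (P : PreIpomset σ) : Prop := ∀ x y, ¬ P.lt x y

/-- Validity: `lt` is a strict partial order which is an interval order, `evord` is acyclic,
for distinct events exactly one of the four relations holds, sources are minimal and
targets are maximal.  (All ipomsets considered are interval.) -/
structure IsIpomset (P : PreIpomset σ) : Prop where
  lt_trans : ∀ x y z, P.lt x y → P.lt y z → P.lt x z
  lt_irrefl : ∀ x, ¬ P.lt x x
  evord_acyclic : ∀ x, ¬ Relation.TransGen P.evord x x
  total : ∀ x y : P.carrier, x ≠ y → P.lt x y ∨ P.lt y x ∨ P.evord x y ∨ P.evord y x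
  lt_not_evord : ∀ x y, P.lt x y → ¬ P.evord x y ∧ ¬ P.evord y x
  src_min : ∀ x ∈ P.S, ∀ y, ¬ P.lt y x
  tgt_max : ∀ x ∈ P.T, ∀ y, ¬ P.lt x y
  interval : ∀ w x y z, P.lt w x → P.lt y z → P.lt w z ∨ P.lt y x

/-- A conclist: a discrete ipomset with empty interfaces. -/
def IsConclist (P : PreIpomset σ) : Prop :=
  P.IsIpomset ∧ P.Discrete ∧ P.S = ∅ ∧ P.T = ∅

/-- A starter `⟨U∖A,U,U⟩`. -/
def IsStarter (P : PreIpomset σ) : Prop := P.IsIpomset ∧ P.Discrete ∧ P.T = Set.univ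

/-- A terminator `⟨U,U,U∖B⟩`. -/
def IsTerminator (P : PreIpomset σ) : Prop := P.IsIpomset ∧ P.Discrete ∧ P.S = Set.univ

/-- An identity `⟨U,U,U⟩`. -/
def IsIdentityIpomset (P : PreIpomset σ) : Prop :=
  P.IsIpomset ∧ P.Discrete ∧ P.S = Set.univ ∧ P.T = Set.univ

def IsProperStarter (P : PreIpomset σ) : Prop := P.IsStarter ∧ P.S ≠ Set.univ

def IsProperTerminator (P : PreIpomset σ) : Prop := P.IsTerminator ∧ P.T ≠ Set.univ

/-- Isomorphism of (pre)ipomsets. -/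
def Iso (P Q : PreIpomset σ) : Prop :=
  ∃ f : P.carrier ≃ Q.carrier,
    (∀ x y, P.lt x y ↔ Q.lt (f x) (f y)) ∧
    (∀ x y, P.evord x y ↔ Q.evord (f x) (f y)) ∧
    (∀ x, x ∈ P.S ↔ f x ∈ Q.S) ∧
    (∀ x, x ∈ P.T ↔ f x ∈ Q.T) ∧
    (∀ x, Q.lab (f x) = P.lab x)

/-- Restriction to a subset of events, with empty interfaces. -/
def restrict (P : PreIpomset σ) (K : Set P.carrier) : PreIpomset σ where
  carrier := {x : P.carrier // x ∈ K}
  fin := by haveI := P.fin; exact inferInstance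
  lt := fun x y => P.lt x.val y.val
  evord := fun x y => P.evord x.val y.val
  S := ∅
  T := ∅
  lab := fun x => P.lab x.val

/-- The source interface of `P` as a conclist. -/
def srcIface (P : PreIpomset σ) : PreIpomset σ := P.restrict P.S

/-- The target interface of `P` as a conclist. -/
def tgtIface (P : PreIpomset σ) : PreIpomset σ := P.restrict P.T

/-- The underlying conclist (forget interfaces). -/
def conclistOf (P : PreIpomset σ) : PreIpomset σ := { P with S := ∅, T := ∅ }

/-- The identity ipomset `⟨U,U,U⟩` on the conclist underlying `P`. -/
def idOf (P : PreIpomset σ) : PreIpomset σ := { P with S := Set.univ, T := Set.univ }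

/-- The discrete ipomset `⟨S,U,T⟩` on the conclist underlying `P`. -/
def withIfaces (P : PreIpomset σ) (S T : Set P.carrier) : PreIpomset σ :=
  { P with S := S, T := T }

/-- The starter `⟨U∖A,U,U⟩` on the conclist underlying `P`. -/
def starter (P : PreIpomset σ) (A : Set P.carrier) : PreIpomset σ :=
  { P with S := Aᶜ, T := Set.univ }

/-- The terminator `⟨U,U,U∖B⟩` on the conclist underlying `P`. -/
def terminator (P : PreIpomset σ) (B : Set P.carrier) : PreIpomset σ :=
  { P with S := Set.univ, T := Bᶜ }

/-- A matching `T_P ≅ S_Q`, i.e. an isomorphism of interface conclists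
along which `P` and `Q` may be glued. -/
structure Matching (P Q : PreIpomset σ) : Type where
  g : {x : P.carrier // x ∈ P.T} ≃ {y : Q.carrier // y ∈ Q.S}
  evord_iff : ∀ x y, P.evord x.val y.val ↔ Q.evord (g x).val (g y).val
  lab_eq : ∀ x, Q.lab (g x).val = P.lab x.val

def gluePOf (P Q : PreIpomset σ) :
    P.carrier ⊕ {y : Q.carrier // y ∉ Q.S} → Option P.carrier
  | Sum.inl x => some x
  | Sum.inr _ => none

noncomputable def glueQOf (P Q : PreIpomset σ) (m : Matching P Q) :
    P.carrier ⊕ {y : Q.carrier // y ∉ Q.S} → Option Q.carrier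
  | Sum.inl x => if h : x ∈ P.T then some (m.g ⟨x, h⟩).val else none
  | Sum.inr y => some y.val

/-- The gluing `P * Q` along a matching `T_P ≅ S_Q`. -/
noncomputable def glue (P Q : PreIpomset σ) (m : Matching P Q) : PreIpomset σ where
  carrier := P.carrier ⊕ {y : Q.carrier // y ∉ Q.S}
  fin := by haveI := P.fin; haveI := Q.fin; exact inferInstance
  lt := fun u v =>
    (∃ x x', gluePOf P Q u = some x ∧ gluePOf P Q v = some x' ∧ P.lt x x') ∨
    (∃ y y', glueQOf P Q m u = some y ∧ glueQOf P Q m v = some y' ∧ Q.lt y y') ∨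
    ((∃ x, gluePOf P Q u = some x ∧ x ∉ P.T) ∧
     (∃ y, glueQOf P Q m v = some y ∧ y ∉ Q.S))
  evord := fun u v =>
    (∃ x x', gluePOf P Q u = some x ∧ gluePOf P Q v = some x' ∧ P.evord x x') ∨
    (∃ y y', glueQOf P Q m u = some y ∧ glueQOf P Q m v = some y' ∧ Q.evord y y')
  S := {u | ∃ x, gluePOf P Q u = some x ∧ x ∈ P.S}
  T := {u | ∃ y, glueQOf P Q m u = some y ∧ y ∈ Q.T}
  lab := Sum.elim P.lab fun y => Q.lab y.val

/-- `R` is (isomorphic to) the gluing `P * Q`; in particular `T_P ≅ S_Q`. -/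
def GlueRel (P Q R : PreIpomset σ) : Prop :=
  ∃ m : Matching P Q, Iso (glue P Q m) R

/-- A choice of gluing (used when a matching is known to exist). -/
noncomputable def glueChoice (P Q : PreIpomset σ) : PreIpomset σ :=
  if h : Nonempty (Matching P Q) then glue P Q h.some else P

/-- `GluesTo l R`: `R` is the gluing of the nonempty list `l` of ipomsets. -/
inductive GluesTo : List (PreIpomset σ) → PreIpomset σ → Prop
  | single {P R : PreIpomset σ} : Iso P R → GluesTo [P] R
  | cons {P : PreIpomset σ} {l : List (PreIpomset σ)} {R' R : PreIpomset σ} :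
      GluesTo l R' → GlueRel P R' R → GluesTo (P :: l) R

/-- Proper starters and proper terminators alternate. -/
def Alternating (l : List (PreIpomset σ)) : Prop :=
  l.Chain' fun P Q => (IsProperStarter P ∧ IsProperTerminator Q) ∨
    (IsProperTerminator P ∧ IsProperStarter Q)

/-- `l` is a sparse step decomposition of `R`: either a single identity, or an
alternating sequence of proper starters and proper terminators gluing to `R`. -/
def IsSparseDecomp (l : List (PreIpomset σ)) (R : PreIpomset σ) : Prop :=
  GluesTo l R ∧
  ((∃ I, l = [I] ∧ IsIdentityIpomset I) ∨
   ((∀ P ∈ l, IsProperStarter P ∨ IsProperTerminator P) ∧ Alternating l))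

/-- `P ∈ iPoms^q`: the sparse step decomposition of `P` does not end with a
proper starter (i.e. it ends with a terminator or is a single identity). -/
def InQ (P : PreIpomset σ) : Prop :=
  ∃ l, IsSparseDecomp l P ∧ ∀ Q, l.getLast? = some Q → ¬ IsProperStarter Q

end PreIpomset

open PreIpomset

variable {σ : Type}

/-! ### Languages and rational operations -/

def glueLang (L M : Set (PreIpomset σ)) : Set (PreIpomset σ) :=
  {R | ∃ P ∈ L, ∃ Q ∈ M, GlueRel P Q R}

def powLang (L : Set (PreIpomset σ)) : ℕ → Set (PreIpomset σ)
  | 0 => L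
  | n + 1 => glueLang L (powLang L n)

/-- `L⁺ = ⋃_{n ≥ 1} Lⁿ`. -/
def plusLang (L : Set (PreIpomset σ)) : Set (PreIpomset σ) := ⋃ n, powLang L n

/-- Rational languages of (interval) ipomsets: generated from `∅` and singletons
(up to isomorphism) of starters and terminators by union, gluing composition and plus. -/
inductive Rational : Set (PreIpomset σ) → Prop
  | empty : Rational ∅
  | single {P : PreIpomset σ} : IsStarter P ∨ IsTerminator P → Rational {Q | Iso Q P}
  | union {L M : Set (PreIpomset σ)} : Rational L → Rational M → Rational (L ∪ M)
  | concat {L M : Set (PreIpomset σ)} : Rational L → Rational M → Rational (glueLang L M)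
  | plus {L : Set (PreIpomset σ)} : Rational L → Rational (plusLang L)

/-! ### P-automata -/

structure PAutomaton (σ : Type) : Type 1 where
  Q : Type
  E : Type
  src : E → Q
  tgt : E → Q
  lab : E → PreIpomset σ
  mu : Q → PreIpomset σ
  start : Set Q
  accept : Set Q

namespace PAutomaton

variable {σ : Type}

/-- The axioms of a P-automaton: finite sets of states and transitions, states
labelled by conclists, transitions by interval ipomsets, with
`μ(s(e)) ≅ S_{λ(e)}` and `μ(t(e)) ≅ T_{λ(e)}`. -/
def IsPA (A : PAutomaton σ) : Prop :=
  Finite A.Q ∧ Finite A.E ∧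
  (∀ q, (A.mu q).IsConclist) ∧ (∀ e, (A.lab e).IsIpomset) ∧
  (∀ e, Iso (A.lab e).srcIface (A.mu (A.src e))) ∧
  (∀ e, Iso (A.lab e).tgtIface (A.mu (A.tgt e)))

/-- ST-automaton: every label is a starter or a terminator. -/
def IsST (A : PAutomaton σ) : Prop := ∀ e, IsStarter (A.lab e) ∨ IsTerminator (A.lab e)

/-- gST-automaton: every label is discrete. -/
def IsGST (A : PAutomaton σ) : Prop := ∀ e, (A.lab e).Discrete

/-- No transition is labelled by an identity. -/
def NoSilent (A : PAutomaton σ) : Prop := ∀ e, ¬ IsIdentityIpomset (A.lab e)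

/-- A reduced gST-automaton: no silent transitions and conditions (a)–(f). -/
def Reduced (A : PAutomaton σ) : Prop :=
  NoSilent A ∧
  (∀ e, A.tgt e ∉ A.start) ∧
  (∀ e, A.src e ∉ A.accept) ∧
  (∀ e, (A.lab e).T = Set.univ → A.tgt e ∈ A.accept) ∧
  (∀ e, (A.lab e).S = Set.univ → A.src e ∈ A.start) ∧
  (∀ e e', A.src e ∈ A.start → A.src e' = A.src e → e' = e) ∧
  (∀ e e', A.tgt e ∈ A.accept → A.tgt e' = A.tgt e → e' = e)

/-- Paths in a P-automaton, from a state to a state. -/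
inductive Path (A : PAutomaton σ) : A.Q → A.Q → Type
  | nil (q : A.Q) : Path A q q
  | cons (e : A.E) {r : A.Q} (rest : Path A (A.tgt e) r) : Path A (A.src e) r

/-- The (interval) ipomset recognized by a path, up to isomorphism:
the gluing of the labels of its transitions (an identity for a constant path). -/
inductive Rec {A : PAutomaton σ} : ∀ {p r : A.Q}, Path A p r → PreIpomset σ → Prop
  | nil (q : A.Q) (R : PreIpomset σ) : Iso (A.mu q).idOf R → Rec (Path.nil q) R
  | cons (e : A.E) {r : A.Q} (rest : Path A (A.tgt e) r) {R' R : PreIpomset σ} :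
      Rec rest R' → GlueRel (A.lab e) R' R → Rec (Path.cons e rest) R

/-- The language of a P-automaton. -/
def lang (A : PAutomaton σ) : Set (PreIpomset σ) :=
  {R | ∃ p r, ∃ α : Path A p r, p ∈ A.start ∧ r ∈ A.accept ∧ Rec α R}

/-- Dimension of a transition. -/
noncomputable def dim (A : PAutomaton σ) (e : A.E) : ℕ := Nat.card (A.lab e).carrier

/-- Number of bad starter transitions of dimension `n`. -/
noncomputable def bst (A : PAutomaton σ) (n : ℕ) : ℕ :=
  Nat.card {e : A.E // IsProperStarter (A.lab e) ∧ A.tgt e ∉ A.accept ∧ A.dim e = n}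

/-- Number of bad terminator transitions of dimension `n`. -/
noncomputable def btt (A : PAutomaton σ) (n : ℕ) : ℕ :=
  Nat.card {e : A.E // IsProperTerminator (A.lab e) ∧ A.src e ∉ A.start ∧ A.dim e = n}

/-- The automaton `𝒜_c`: remove the starter transition `c`; for every transition `e`
out of `t(c)` add a transition `e*` from `s(c)` to `t(e)` labelled `λ(c) * λ(e)`. -/
noncomputable def Ac (A : PAutomaton σ) (c : A.E) : PAutomaton σ where
  Q := A.Q
  E := {e : A.E // e ≠ c} ⊕ {e : A.E // A.src e = A.tgt c}
  src := Sum.elim (fun e => A.src e.val) fun _ => A.src c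
  tgt := Sum.elim (fun e => A.tgt e.val) fun e => A.tgt e.val
  lab := Sum.elim (fun e => A.lab e.val) fun e => glueChoice (A.lab c) (A.lab e.val)
  mu := A.mu
  start := A.start
  accept := A.accept

/-- Disjoint union of two P-automata. -/
def sumAut (A B : PAutomaton σ) : PAutomaton σ where
  Q := A.Q ⊕ B.Q
  E := A.E ⊕ B.E
  src := Sum.elim (Sum.inl ∘ A.src) (Sum.inr ∘ B.src)
  tgt := Sum.elim (Sum.inl ∘ A.tgt) (Sum.inr ∘ B.tgt)
  lab := Sum.elim A.lab B.lab
  mu := Sum.elim A.mu B.mu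
  start := Sum.inl '' A.start ∪ Sum.inr '' B.start
  accept := Sum.inl '' A.accept ∪ Sum.inr '' B.accept

/-- Concatenation `𝒜 * ℬ`: disjoint union together with identity-labelled transitions
from accepting states of `𝒜` to initial states of `ℬ` with isomorphic state labels. -/
def concatAut (A B : PAutomaton σ) : PAutomaton σ where
  Q := A.Q ⊕ B.Q
  E := A.E ⊕ B.E ⊕
    {pq : A.Q × B.Q // pq.1 ∈ A.accept ∧ pq.2 ∈ B.start ∧ Iso (A.mu pq.1) (B.mu pq.2)}
  src := Sum.elim (Sum.inl ∘ A.src)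
    (Sum.elim (Sum.inr ∘ B.src) fun pq => Sum.inl pq.val.1)
  tgt := Sum.elim (Sum.inl ∘ A.tgt)
    (Sum.elim (Sum.inr ∘ B.tgt) fun pq => Sum.inr pq.val.2)
  lab := Sum.elim A.lab (Sum.elim B.lab fun pq => (A.mu pq.val.1).idOf)
  mu := Sum.elim A.mu B.mu
  start := Sum.inl '' A.start
  accept := Sum.inr '' B.accept

/-- Kleene plus `𝒜⁺`: add identity-labelled transitions from accepting states
to initial states with isomorphic state labels. -/
def plusAut (A : PAutomaton σ) : PAutomaton σ where
  Q := A.Q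
  E := A.E ⊕
    {pq : A.Q × A.Q // pq.1 ∈ A.accept ∧ pq.2 ∈ A.start ∧ Iso (A.mu pq.1) (A.mu pq.2)}
  src := Sum.elim A.src fun pq => pq.val.1
  tgt := Sum.elim A.tgt fun pq => pq.val.2
  lab := Sum.elim A.lab fun pq => (A.mu pq.val.1).idOf
  mu := A.mu
  start := A.start
  accept := A.accept

end PAutomaton

/-! ### Partial HDAs -/

/-- `g` exhibits `V` as the sub-conclist of `U` obtained by removing the events in `K`. -/
def IsFaceEmbed (U : PreIpomset σ) (K : Set U.carrier) (V : PreIpomset σ)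
    (g : V.carrier → U.carrier) : Prop :=
  Function.Injective g ∧ Set.range g = Kᶜ ∧
  (∀ u v, V.evord u v ↔ U.evord (g u) (g v)) ∧
  (∀ u, U.lab (g u) = V.lab u)

/-- The data of a partial higher-dimensional automaton: cells labelled by conclists,
partial face maps, initial and accepting cells. -/
structure PrePHDA (σ : Type) : Type 1 where
  cell : Type
  ev : cell → PreIpomset σ
  face : (x : cell) → Set (ev x).carrier → Set (ev x).carrier → Option cell
  start : Set cell
  accept : Set cell

namespace PrePHDA

variable {σ : Type}

/-- The lax precubical identity: whenever `δ_{A,B}(x)` and `δ_{C,D}(δ_{A,B}(x))` are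
defined, `δ_{A∪C,B∪D}(x)` is defined and equal to the composite. -/
def IsLax (X : PrePHDA σ) : Prop :=
  ∀ x (A B : Set (X.ev x).carrier) y, X.face x A B = some y →
    ∀ g, IsFaceEmbed (X.ev x) (A ∪ B) (X.ev y) g →
      ∀ (C D : Set (X.ev y).carrier) z, X.face y C D = some z →
        X.face x (A ∪ g '' C) (B ∪ g '' D) = some z

/-- The axioms of a partial HDA. -/
def IsPHDA (X : PrePHDA σ) : Prop :=
  (∀ x, (X.ev x).IsConclist) ∧
  (∀ x, X.face x ∅ ∅ = some x) ∧
  (∀ x A B y, X.face x A B = some y →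
    Disjoint A B ∧ ∃ g, IsFaceEmbed (X.ev x) (A ∪ B) (X.ev y) g) ∧
  IsLax X

/-- Strictness: `δ_{C,D} ∘ δ_{A,B} = δ_{A∪C,B∪D}` as partial functions. -/
def IsStrict (X : PrePHDA σ) : Prop :=
  IsPHDA X ∧
  (∀ x (A B : Set (X.ev x).carrier) y, X.face x A B = some y →
    ∀ g, IsFaceEmbed (X.ev x) (A ∪ B) (X.ev y) g →
      ∀ C D : Set (X.ev y).carrier,
        X.face x (A ∪ g '' C) (B ∪ g '' D) = X.face y C D) ∧
  (∀ x (A B C D : Set (X.ev x).carrier),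
    Disjoint (A ∪ C) (B ∪ D) → C ∪ D ⊆ (A ∪ B)ᶜ →
    X.face x A B = none → X.face x (A ∪ C) (B ∪ D) = none)

/-- Paths in a partial HDA: sequences of upsteps and downsteps. -/
inductive Path (X : PrePHDA σ) : X.cell → X.cell → Type
  | nil (x : X.cell) : Path X x x
  | up {x z : X.cell} (y : X.cell) (A : Set (X.ev y).carrier)
      (h : X.face y A ∅ = some x) (rest : Path X y z) : Path X x z
  | down {z w : X.cell} (y : X.cell) (B : Set (X.ev y).carrier)
      (h : X.face y ∅ B = some z) (rest : Path X z w) : Path X y w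

/-- Directions of the steps of a path (`true` = upstep). -/
def Path.dirs {X : PrePHDA σ} : {x z : X.cell} → Path X x z → List Bool
  | _, _, .nil _ => []
  | _, _, .up _ _ _ rest => true :: rest.dirs
  | _, _, .down _ _ _ rest => false :: rest.dirs

/-- A path is sparse if upsteps and downsteps alternate. -/
def Path.Sparse {X : PrePHDA σ} {x z : X.cell} (α : Path X x z) : Prop :=
  α.dirs.Chain' (· ≠ ·)

/-- Concatenation of paths. -/
def Path.comp {X : PrePHDA σ} : {x y z : X.cell} → Path X x y → Path X y z → Path X x z
  | _, _, _, .nil _, β => β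
  | _, _, _, .up y A h rest, β => .up y A h (rest.comp β)
  | _, _, _, .down y B h rest, β => .down y B h (rest.comp β)

/-- The ipomset recognized by a path, up to isomorphism: the gluing of the starters
and terminators of its steps (an identity for a constant path). -/
inductive Rec {X : PrePHDA σ} : ∀ {x z : X.cell}, Path X x z → PreIpomset σ → Prop
  | nil (x : X.cell) (R : PreIpomset σ) :
      Iso (X.ev x).idOf R → Rec (Path.nil x) R
  | up {x z : X.cell} (y : X.cell) (A : Set (X.ev y).carrier)
      (h : X.face y A ∅ = some x) (rest : Path X y z) {R' R : PreIpomset σ} :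
      Rec rest R' → GlueRel ((X.ev y).starter A) R' R → Rec (Path.up y A h rest) R
  | down {z w : X.cell} (y : X.cell) (B : Set (X.ev y).carrier)
      (h : X.face y ∅ B = some z) (rest : Path X z w) {R' R : PreIpomset σ} :
      Rec rest R' → GlueRel ((X.ev y).terminator B) R' R → Rec (Path.down y B h rest) R

/-- The language of a partial HDA. -/
def lang (X : PrePHDA σ) : Set (PreIpomset σ) :=
  {R | ∃ x z, ∃ α : Path X x z, x ∈ X.start ∧ z ∈ X.accept ∧ Rec α R}

/-- `X(K,P)`: cells reachable from `K` by a path recognizing `P`. -/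
def track (X : PrePHDA σ) (K : Set X.cell) (P : PreIpomset σ) : Set X.cell :=
  {x | ∃ s, ∃ α : Path X s x, s ∈ K ∧ Rec α P}

/-- Deterministic partial HDA: at most one initial cell per conclist, and lower
face maps are "injective" in the appropriate sense. -/
def Deterministic (X : PrePHDA σ) : Prop :=
  (∀ x y, x ∈ X.start → y ∈ X.start → Iso (X.ev x) (X.ev y) → x = y) ∧
  (∀ (y y' : X.cell) (A : Set (X.ev y).carrier) (A' : Set (X.ev y').carrier)
      (x : X.cell), X.face y A ∅ = some x → X.face y' A' ∅ = some x →
    (∃ f : (X.ev y).carrier ≃ (X.ev y').carrier,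
      (∀ u v, (X.ev y).evord u v ↔ (X.ev y').evord (f u) (f v)) ∧
      (∀ u, (X.ev y').lab (f u) = (X.ev y).lab u) ∧ f '' A = A') → y = y')

end PrePHDA

/-! ### Relational HDAs -/

/-- The data of a relational HDA: face relations instead of partial face maps. -/
structure PreRHDA (σ : Type) : Type 1 where
  cell : Type
  ev : cell → PreIpomset σ
  face : (x : cell) → Set (ev x).carrier → Set (ev x).carrier → Set cell
  start : Set cell
  accept : Set cell

namespace PreRHDA

variable {σ : Type}

/-- The axioms of a relational HDA, with the lax precubical identity
`δ_{C,D} ∘ δ_{A,B} ⊆ δ_{A∪C,B∪D}`. -/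
def IsRHDA (X : PreRHDA σ) : Prop :=
  (∀ x, (X.ev x).IsConclist) ∧
  (∀ x, X.face x ∅ ∅ = {x}) ∧
  (∀ x A B y, y ∈ X.face x A B →
    Disjoint A B ∧ ∃ g, IsFaceEmbed (X.ev x) (A ∪ B) (X.ev y) g) ∧
  (∀ x (A B : Set (X.ev x).carrier) y, y ∈ X.face x A B →
    ∀ g, IsFaceEmbed (X.ev x) (A ∪ B) (X.ev y) g →
      ∀ (C D : Set (X.ev y).carrier) z, z ∈ X.face y C D →
        z ∈ X.face x (A ∪ g '' C) (B ∪ g '' D))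

/-- Paths in a relational HDA. -/
inductive Path (X : PreRHDA σ) : X.cell → X.cell → Type 1
  | nil (x : X.cell) : Path X x x
  | up {x z : X.cell} (y : X.cell) (A : Set (X.ev y).carrier)
      (h : x ∈ X.face y A ∅) (rest : Path X y z) : Path X x z
  | down {z w : X.cell} (y : X.cell) (B : Set (X.ev y).carrier)
      (h : z ∈ X.face y ∅ B) (rest : Path X z w) : Path X y w

/-- The ipomset recognized by a path in a relational HDA. -/
inductive Rec {X : PreRHDA σ} : ∀ {x z : X.cell}, Path X x z → PreIpomset σ → Prop
  | nil (x : X.cell) (R : PreIpomset σ) :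
      Iso (X.ev x).idOf R → Rec (Path.nil x) R
  | up {x z : X.cell} (y : X.cell) (A : Set (X.ev y).carrier)
      (h : x ∈ X.face y A ∅) (rest : Path X y z) {R' R : PreIpomset σ} :
      Rec rest R' → GlueRel ((X.ev y).starter A) R' R → Rec (Path.up y A h rest) R
  | down {z w : X.cell} (y : X.cell) (B : Set (X.ev y).carrier)
      (h : z ∈ X.face y ∅ B) (rest : Path X z w) {R' R : PreIpomset σ} :
      Rec rest R' → GlueRel ((X.ev y).terminator B) R' R → Rec (Path.down y B h rest) R

/-- The language of a relational HDA. -/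
def lang (X : PreRHDA σ) : Set (PreIpomset σ) :=
  {R | ∃ x z, ∃ α : Path X x z, x ∈ X.start ∧ z ∈ X.accept ∧ Rec α R}

/-- The ST-automaton `ST(X)` of a relational HDA `X`: states are cells, transitions
mimic the starting and terminating of events. -/
def stAut (X : PreRHDA σ) : PAutomaton σ where
  Q := X.cell
  E := (Σ q : X.cell, Σ A : Set (X.ev q).carrier, {p : X.cell // p ∈ X.face q A ∅}) ⊕
       (Σ q : X.cell, Σ B : Set (X.ev q).carrier, {r : X.cell // r ∈ X.face q ∅ B})
  src := Sum.elim (fun t => t.2.2.val) fun t => t.1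
  tgt := Sum.elim (fun t => t.1) fun t => t.2.2.val
  lab := Sum.elim (fun t => (X.ev t.1).starter t.2.1) fun t => (X.ev t.1).terminator t.2.1
  mu := X.ev
  start := X.start
  accept := X.accept

end PreRHDA

/-! ### The partial HDA of a reduced gST-automaton -/

open PAutomaton

/-- The cell representing a state `q` in `X(𝒜)`: `q` is merged with a terminator
transition out of it or a starter transition into it, if such exists. -/
noncomputable def cellOfState (A : PAutomaton σ) (q : A.Q) : A.E ⊕ A.Q :=
  if h : ∃ e, IsTerminator (A.lab e) ∧ A.src e = q then Sum.inl h.choose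
  else if h' : ∃ e, IsStarter (A.lab e) ∧ A.tgt e = q then Sum.inl h'.choose
  else Sum.inr q

/-- `X(𝒜)`: cells are `(Q ⊔ E)/∼`, with the only defined (nontrivial) face maps
`δ⁰_{U∖S}([e]) = [s(e)]` and `δ¹_{U∖T}([e]) = [t(e)]` for `λ(e) = ⟨S,U,T⟩`. -/
noncomputable def XofA (A : PAutomaton σ) : PrePHDA σ where
  cell := A.E ⊕ A.Q
  ev := Sum.elim (fun e => (A.lab e).conclistOf) A.mu
  face := fun x =>
    match x with
    | Sum.inl e => fun As Bs =>
        if As = ∅ ∧ Bs = ∅ then some (Sum.inl e)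
        else if As = (A.lab e).Sᶜ ∧ Bs = ∅ then some (cellOfState A (A.src e))
        else if As = ∅ ∧ Bs = (A.lab e).Tᶜ then some (cellOfState A (A.tgt e))
        else none
    | Sum.inr q => fun As Bs =>
        if As = ∅ ∧ Bs = ∅ then some (Sum.inr q) else none
  start := cellOfState A '' A.start
  accept := cellOfState A '' A.accept

end HDA

/-!
The ipomset recognized by a path is the right-nested gluing of its labels, so both inclusions
rest on associativity of gluing up to isomorphism, `a * (X * Q) ≅ (a * X) * Q`. Recording a
matching as the partial map `Matching.partner`, both sides have the same events (those of `a`,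
`X` and `Q`), and their precedence, event order and interfaces become the same conditions on
these partial maps.

An accepting path of `𝒜⁺` is cut at its added transitions into accepting paths of `𝒜`, each
added transition contributing a gluing with an identity. Conversely, if the ipomsets of two
accepting paths of `𝒜` can be glued, the last state of the first and the first state of the
second carry isomorphic conclists (the interfaces of the recognized ipomsets), so an added
transition joins the two paths.
-/

namespace HDA

namespace PreIpomset

variable {σ : Type}

structure IsIsoMap {P Q : PreIpomset σ} (f : P.carrier ≃ Q.carrier) : Prop where
  lt_iff : ∀ x y, P.lt x y ↔ Q.lt (f x) (f y)
  evord_iff : ∀ x y, P.evord x y ↔ Q.evord (f x) (f y)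
  mem_S_iff : ∀ x, x ∈ P.S ↔ f x ∈ Q.S
  mem_T_iff : ∀ x, x ∈ P.T ↔ f x ∈ Q.T
  lab_eq : ∀ x, Q.lab (f x) = P.lab x

lemma IsIsoMap.iso {P Q : PreIpomset σ} {f : P.carrier ≃ Q.carrier} (hf : IsIsoMap f) :
    Iso P Q :=
  ⟨f, hf.1, hf.2, hf.3, hf.4, hf.5⟩

lemma Iso.exists_isIsoMap {P Q : PreIpomset σ} (h : Iso P Q) :
    ∃ f : P.carrier ≃ Q.carrier, IsIsoMap f :=
  let ⟨f, h1, h2, h3, h4, h5⟩ := h; ⟨f, h1, h2, h3, h4, h5⟩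

lemma IsIsoMap.refl (P : PreIpomset σ) : IsIsoMap (Equiv.refl P.carrier) :=
  ⟨fun _ _ => .rfl, fun _ _ => .rfl, fun _ => .rfl, fun _ => .rfl, fun _ => rfl⟩

lemma Iso.refl (P : PreIpomset σ) : Iso P P := (IsIsoMap.refl P).iso

lemma Iso.symm {P Q : PreIpomset σ} (h : Iso P Q) : Iso Q P := by
  obtain ⟨f, h1, h2, h3, h4, h5⟩ := h
  refine ⟨f.symm, fun x y => ?_, fun x y => ?_, fun x => ?_, fun x => ?_, fun x => ?_⟩
  · simp [h1]
  · simp [h2]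
  · simp [h3]
  · simp [h4]
  · simp [← h5 (f.symm x)]

lemma Iso.trans {P Q R : PreIpomset σ} (h : Iso P Q) (h' : Iso Q R) : Iso P R := by
  obtain ⟨f, h1, h2, h3, h4, h5⟩ := h
  obtain ⟨g, g1, g2, g3, g4, g5⟩ := h'
  exact ⟨f.trans g, fun x y => (h1 x y).trans (g1 _ _), fun x y => (h2 x y).trans (g2 _ _),
    fun x => (h3 x).trans (g3 _), fun x => (h4 x).trans (g4 _), fun x => (g5 (f x)).trans (h5 x)⟩

lemma Discrete.of_iso {P Q : PreIpomset σ} (h : Iso P Q) (hQ : Q.Discrete) : P.Discrete := by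
  obtain ⟨f, h1, -⟩ := h
  exact fun x y hxy => hQ _ _ ((h1 x y).1 hxy)

lemma Iso.srcIface_congr {P Q : PreIpomset σ} (h : Iso P Q) : Iso P.srcIface Q.srcIface := by
  obtain ⟨f, f1, f2, f3, -, f5⟩ := h
  exact ⟨f.subtypeEquiv f3, fun x y => f1 x.1 y.1, fun x y => f2 x.1 y.1, fun _ => .rfl,
    fun _ => .rfl, fun x => f5 x.1⟩

lemma Iso.tgtIface_congr {P Q : PreIpomset σ} (h : Iso P Q) : Iso P.tgtIface Q.tgtIface := by
  obtain ⟨f, f1, f2, -, f4, f5⟩ := h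
  exact ⟨f.subtypeEquiv f4, fun x y => f1 x.1 y.1, fun x y => f2 x.1 y.1, fun _ => .rfl,
    fun _ => .rfl, fun x => f5 x.1⟩

namespace Matching

variable {P Q : PreIpomset σ} (m : Matching P Q)

lemma ext {m' : Matching P Q} (h : ∀ x, (m.g x : Q.carrier) = m'.g x) : m = m' := by
  have hg : m.g = m'.g := Equiv.ext fun x => Subtype.ext (h x)
  cases m
  cases m'
  congr

noncomputable def partner (x : P.carrier) : Option Q.carrier :=
  if h : x ∈ P.T then some (m.g ⟨x, h⟩).val else none

lemma partner_of_mem {x : P.carrier} (h : x ∈ P.T) : m.partner x = some (m.g ⟨x, h⟩).val :=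
  dif_pos h

lemma partner_of_not_mem {x : P.carrier} (h : x ∉ P.T) : m.partner x = none :=
  dif_neg h

lemma partner_eq_some_iff {x : P.carrier} {y : Q.carrier} :
    m.partner x = some y ↔ ∃ h : x ∈ P.T, (m.g ⟨x, h⟩).1 = y := by
  unfold partner
  split_ifs with h <;> simp [h]

lemma mem_S_of_partner_eq_some {x : P.carrier} {y : Q.carrier} (h : m.partner x = some y) :
    y ∈ Q.S := by
  unfold partner at h
  split_ifs at h
  cases h
  exact (m.g _).2

end Matching

lemma Matching.iso_tgtIface_srcIface {P Q : PreIpomset σ} (m : Matching P Q)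
    (hP : Discrete P.tgtIface) (hQ : Discrete Q.srcIface) : Iso P.tgtIface Q.srcIface :=
  ⟨m.g, fun x y => iff_of_false (hP x y) (hQ _ _), m.evord_iff, fun _ => .rfl, fun _ => .rfl,
    m.lab_eq⟩

lemma IsConclist.iso_srcIface_idOf {C : PreIpomset σ} (hC : C.IsConclist) :
    Iso C.idOf.srcIface C :=
  ⟨Equiv.Set.univ C.carrier, fun _ _ => .rfl, fun _ _ => .rfl,
    fun _ => by rw [hC.2.2.1]; exact .rfl, fun _ => by rw [hC.2.2.2]; exact .rfl,
    fun _ => rfl⟩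

lemma IsConclist.iso_tgtIface_idOf {C : PreIpomset σ} (hC : C.IsConclist) :
    Iso C.idOf.tgtIface C :=
  ⟨Equiv.Set.univ C.carrier, fun _ _ => .rfl, fun _ _ => .rfl,
    fun _ => by rw [hC.2.2.1]; exact .rfl, fun _ => by rw [hC.2.2.2]; exact .rfl,
    fun _ => rfl⟩

lemma IsConclist.idOf_isIpomset {C : PreIpomset σ} (hC : C.IsConclist) : C.idOf.IsIpomset :=
  let ⟨⟨i1, i2, i3, i4, i5, _, _, i8⟩, hd, _⟩ := hC
  ⟨i1, i2, i3, i4, i5, fun x _ y => hd y x, fun x _ y => hd x y, i8⟩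

/-! ### Gluing -/

section Glue

variable {P Q : PreIpomset σ} (m : Matching P Q)

-- The constructors of the carrier of `glue P Q m`, typed so that rewriting never unfolds `glue`.
def glueInl (x : P.carrier) : (glue P Q m).carrier := Sum.inl x

def glueInr (y : {y : Q.carrier // y ∉ Q.S}) : (glue P Q m).carrier := Sum.inr y

@[elab_as_elim]
lemma glue_cases {motive : (glue P Q m).carrier → Prop} (inl : ∀ x, motive (glueInl m x))
    (inr : ∀ y, motive (glueInr m y)) (u : (glue P Q m).carrier) : motive u := by
  rcases u with x | y
  exacts [inl x, inr y]

lemma glueInl_injective : Function.Injective (glueInl m) := Sum.inl_injective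

lemma glueQOf_glueInl (x : P.carrier) : glueQOf P Q m (glueInl m x) = m.partner x := rfl

lemma glueQOf_glueInr (y : {y : Q.carrier // y ∉ Q.S}) :
    glueQOf P Q m (glueInr m y) = some y.1 := rfl

variable (x x' : P.carrier) (y y' : {y : Q.carrier // y ∉ Q.S})

lemma glue_lt_inl_inl : (glue P Q m).lt (glueInl m x) (glueInl m x') ↔ P.lt x x' ∨
    ∃ z, m.partner x = some z ∧ ∃ z', m.partner x' = some z' ∧ Q.lt z z' := by
  refine ⟨?_, ?_⟩
  · rintro (⟨_, _, ⟨⟩, ⟨⟩, h⟩ | ⟨z, z', h, h', h''⟩ | ⟨-, _, h, hS⟩)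
    · exact .inl h
    · exact .inr ⟨z, h, z', h', h''⟩
    · exact absurd (m.mem_S_of_partner_eq_some h) hS
  · rintro (h | ⟨z, h, z', h', h''⟩)
    · exact .inl ⟨_, _, rfl, rfl, h⟩
    · exact .inr (.inl ⟨z, z', h, h', h''⟩)

lemma glue_lt_inl_inr : (glue P Q m).lt (glueInl m x) (glueInr m y) ↔ x ∉ P.T ∨
    ∃ z, m.partner x = some z ∧ Q.lt z y := by
  refine ⟨?_, ?_⟩
  · rintro (⟨_, _, -, ⟨⟩, -⟩ | ⟨_, _, h, ⟨⟩, h'⟩ | ⟨⟨_, ⟨⟩, h⟩, -⟩)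
    · exact .inr ⟨_, h, h'⟩
    · exact .inl h
  · rintro (h | ⟨z, hz, h⟩)
    · exact .inr (.inr ⟨⟨x, rfl, h⟩, y, rfl, y.2⟩)
    · exact .inr (.inl ⟨_, _, hz, rfl, h⟩)

lemma glue_lt_inr_inl : (glue P Q m).lt (glueInr m y) (glueInl m x) ↔
    ∃ z, m.partner x = some z ∧ Q.lt y z := by
  refine ⟨?_, fun ⟨z, hz, h⟩ => .inr (.inl ⟨_, _, rfl, hz, h⟩)⟩
  rintro (⟨_, _, ⟨⟩, -, -⟩ | ⟨_, _, ⟨⟩, h, h'⟩ | ⟨⟨_, ⟨⟩, -⟩, -⟩)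
  exact ⟨_, h, h'⟩

lemma glue_lt_inr_inr : (glue P Q m).lt (glueInr m y) (glueInr m y') ↔ Q.lt y y' := by
  refine ⟨?_, fun h => .inr (.inl ⟨_, _, rfl, rfl, h⟩)⟩
  rintro (⟨_, _, ⟨⟩, -, -⟩ | ⟨_, _, ⟨⟩, ⟨⟩, h⟩ | ⟨⟨_, ⟨⟩, -⟩, -⟩)
  exact h

lemma glue_evord_inl_inl : (glue P Q m).evord (glueInl m x) (glueInl m x') ↔ P.evord x x' := by
  refine ⟨?_, fun h => .inl ⟨_, _, rfl, rfl, h⟩⟩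
  rintro (⟨_, _, ⟨⟩, ⟨⟩, h⟩ | ⟨_, _, h, h', h''⟩)
  · exact h
  · change m.partner x = _ at h
    change m.partner x' = _ at h'
    unfold Matching.partner at h h'
    split_ifs at h h' with hx hx'
    cases h
    cases h'
    exact (m.evord_iff ⟨x, hx⟩ ⟨x', hx'⟩).2 h''

lemma glue_evord_inl_inr : (glue P Q m).evord (glueInl m x) (glueInr m y) ↔
    ∃ z, m.partner x = some z ∧ Q.evord z y := by
  refine ⟨?_, fun ⟨z, hz, h⟩ => .inr ⟨_, _, hz, rfl, h⟩⟩
  rintro (⟨_, _, -, ⟨⟩, -⟩ | ⟨_, _, h, ⟨⟩, h'⟩)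
  exact ⟨_, h, h'⟩

lemma glue_evord_inr_inl : (glue P Q m).evord (glueInr m y) (glueInl m x) ↔
    ∃ z, m.partner x = some z ∧ Q.evord y z := by
  refine ⟨?_, fun ⟨z, hz, h⟩ => .inr ⟨_, _, rfl, hz, h⟩⟩
  rintro (⟨_, _, ⟨⟩, -, -⟩ | ⟨_, _, ⟨⟩, h, h'⟩)
  exact ⟨_, h, h'⟩

lemma glue_evord_inr_inr : (glue P Q m).evord (glueInr m y) (glueInr m y') ↔ Q.evord y y' := by
  refine ⟨?_, fun h => .inr ⟨_, _, rfl, rfl, h⟩⟩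
  rintro (⟨_, _, ⟨⟩, -, -⟩ | ⟨_, _, ⟨⟩, ⟨⟩, h⟩)
  exact h

lemma mem_glue_S_inl : glueInl m x ∈ (glue P Q m).S ↔ x ∈ P.S :=
  ⟨fun ⟨_, h, hS⟩ => by cases h; exact hS, fun h => ⟨x, rfl, h⟩⟩

lemma not_mem_glue_S_inr : glueInr m y ∉ (glue P Q m).S := fun ⟨_, h, _⟩ => by cases h

lemma mem_glue_T_inl : glueInl m x ∈ (glue P Q m).T ↔ ∃ z, m.partner x = some z ∧ z ∈ Q.T :=
  Iff.rfl

lemma mem_glue_T_inr : glueInr m y ∈ (glue P Q m).T ↔ y.1 ∈ Q.T :=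
  ⟨fun ⟨_, h, hT⟩ => by cases h; exact hT, fun h => ⟨_, rfl, h⟩⟩

lemma glue_lab_inl : (glue P Q m).lab (glueInl m x) = P.lab x := rfl

lemma glue_lab_inr : (glue P Q m).lab (glueInr m y) = Q.lab y.1 := rfl

end Glue

lemma glue_congr {P P' Q Q' : PreIpomset σ} {m : Matching P Q} {m' : Matching P' Q'}
    {f : P.carrier ≃ P'.carrier} {g : Q.carrier ≃ Q'.carrier} (hf : IsIsoMap f)
    (hg : IsIsoMap g) (hfg : ∀ x, m'.partner (f x) = (m.partner x).map g) :
    Iso (glue P Q m) (glue P' Q' m') := by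
  have hS : ∀ y, y ∉ Q.S ↔ g y ∉ Q'.S := fun y => not_congr (hg.mem_S_iff y)
  let e : (glue P Q m).carrier ≃ (glue P' Q' m').carrier :=
    Equiv.sumCongr f (g.subtypeEquiv hS)
  have e_inl : ∀ x, e (glueInl m x) = glueInl m' (f x) := fun _ => rfl
  have e_inr : ∀ y, e (glueInr m y) = glueInr m' ⟨g y, (hS y).1 y.2⟩ := fun _ => rfl
  refine ⟨e, fun u v => ?_, fun u v => ?_, fun u => ?_, fun u => ?_, fun u => ?_⟩
  all_goals
    induction u using glue_cases <;> try induction v using glue_cases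
  all_goals
    simp only [e_inl, e_inr, glue_lt_inl_inl, glue_lt_inl_inr, glue_lt_inr_inl, glue_lt_inr_inr,
      glue_evord_inl_inl, glue_evord_inl_inr, glue_evord_inr_inl, glue_evord_inr_inr,
      mem_glue_S_inl, not_mem_glue_S_inr, mem_glue_T_inl, mem_glue_T_inr, glue_lab_inl,
      glue_lab_inr, hfg, Option.map_eq_some_iff, hf.lt_iff, hf.evord_iff, hf.mem_S_iff,
      hf.mem_T_iff, hf.lab_eq, hg.lt_iff, hg.evord_iff, hg.mem_T_iff, hg.lab_eq,
      exists_exists_and_eq_and]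

lemma GlueRel.iso_right {P Q R R' : PreIpomset σ} (h : GlueRel P Q R) (hi : Iso R R') :
    GlueRel P Q R' :=
  let ⟨m, hm⟩ := h; ⟨m, hm.trans hi⟩

lemma GlueRel.congr_left {P' P Q R : PreIpomset σ} (hi : Iso P' P) (h : GlueRel P Q R) :
    GlueRel P' Q R := by
  obtain ⟨f, hf⟩ := hi.exists_isIsoMap
  obtain ⟨m, hm⟩ := h
  let fT := f.subtypeEquiv hf.mem_T_iff
  let m' : Matching P' Q :=
    { g := fT.trans m.g
      evord_iff := fun x y => (hf.evord_iff _ _).trans (m.evord_iff (fT x) (fT y))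
      lab_eq := fun x => (m.lab_eq (fT x)).trans (hf.lab_eq _) }
  refine ⟨m', (glue_congr hf (IsIsoMap.refl Q) fun x => ?_).trans hm⟩
  by_cases hx : x ∈ P'.T
  · rw [m.partner_of_mem ((hf.mem_T_iff x).1 hx), m'.partner_of_mem hx]
    rfl
  · rw [m.partner_of_not_mem (mt (hf.mem_T_iff x).2 hx), m'.partner_of_not_mem hx]
    rfl

lemma GlueRel.congr_right {P Q' Q R : PreIpomset σ} (hi : Iso Q' Q) (h : GlueRel P Q R) :
    GlueRel P Q' R := by
  obtain ⟨f, hf⟩ := hi.exists_isIsoMap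
  obtain ⟨m, hm⟩ := h
  let fS := f.subtypeEquiv hf.mem_S_iff
  have hfS : ∀ x, f (fS.symm (m.g x)).1 = (m.g x).1 := fun x => by
    simp only [fS, Equiv.subtypeEquiv_symm, Equiv.subtypeEquiv_apply, Equiv.apply_symm_apply]
  let m' : Matching P Q' :=
    { g := m.g.trans fS.symm
      evord_iff := fun x y => by
        simp only [Equiv.trans_apply, hf.evord_iff, hfS]
        exact m.evord_iff x y
      lab_eq := fun x => by
        simp only [Equiv.trans_apply, ← hf.lab_eq, hfS]
        exact m.lab_eq x }
  refine ⟨m', (glue_congr (IsIsoMap.refl P) hf fun x => ?_).trans hm⟩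
  by_cases hx : x ∈ P.T
  · rw [Equiv.refl_apply, m.partner_of_mem hx, m'.partner_of_mem hx, Option.map_some]
    exact congrArg some (hfS _).symm
  · rw [Equiv.refl_apply, m.partner_of_not_mem hx, m'.partner_of_not_mem hx]
    rfl

section GlueInterfaces

variable {P Q : PreIpomset σ} (m : Matching P Q)

noncomputable def glueInclRight (y : Q.carrier) : (glue P Q m).carrier :=
  if h : y ∈ Q.S then glueInl m (m.g.symm ⟨y, h⟩) else glueInr m ⟨y, h⟩

lemma glueQOf_glueInclRight (y : Q.carrier) :
    glueQOf P Q m (glueInclRight m y) = some y := by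
  unfold glueInclRight
  split_ifs with h
  · rw [glueQOf_glueInl, m.partner_of_mem (m.g.symm ⟨y, h⟩).2]
    simp
  · rfl

lemma eq_of_glueQOf_eq {u v : (glue P Q m).carrier} {y : Q.carrier}
    (hu : glueQOf P Q m u = some y) (hv : glueQOf P Q m v = some y) : u = v := by
  induction u using glue_cases with
  | inl x =>
    obtain ⟨hx, rfl⟩ := (m.partner_eq_some_iff).1 hu
    induction v using glue_cases with
    | inl x' =>
      obtain ⟨hx', h⟩ := (m.partner_eq_some_iff).1 hv
      cases congrArg Subtype.val (m.g.injective (Subtype.ext h))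
      rfl
    | inr y' => exact absurd (Option.some.inj hv ▸ (m.g _).2) y'.2
  | inr y =>
    cases Option.some.inj hu
    induction v using glue_cases with
    | inl x' =>
      obtain ⟨hx', h⟩ := (m.partner_eq_some_iff).1 hv
      exact absurd (h ▸ (m.g _).2) y.2
    | inr y' => exact congrArg (glueInr m) (Subtype.ext (Option.some.inj hv).symm)

lemma glue_evord_of_glueQOf {u v : (glue P Q m).carrier} {y y' : Q.carrier}
    (hu : glueQOf P Q m u = some y) (hv : glueQOf P Q m v = some y') :
    (glue P Q m).evord u v ↔ Q.evord y y' := by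
  induction u using glue_cases <;> induction v using glue_cases <;>
    simp only [glueQOf_glueInl, glueQOf_glueInr, Option.some.injEq] at hu hv <;>
    simp only [glue_evord_inl_inl, glue_evord_inl_inr, glue_evord_inr_inl, glue_evord_inr_inr,
      hu, hv, Option.some.injEq, exists_eq_left']
  obtain ⟨hx, rfl⟩ := (m.partner_eq_some_iff).1 hu
  obtain ⟨hx', rfl⟩ := (m.partner_eq_some_iff).1 hv
  exact m.evord_iff ⟨_, hx⟩ ⟨_, hx'⟩

lemma glue_lt_of_glueQOf (hP : Discrete P.tgtIface) {u v : (glue P Q m).carrier}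
    {y y' : Q.carrier} (hu : glueQOf P Q m u = some y) (hv : glueQOf P Q m v = some y') :
    (glue P Q m).lt u v ↔ Q.lt y y' := by
  induction u using glue_cases <;> induction v using glue_cases <;>
    simp only [glueQOf_glueInl, glueQOf_glueInr, Option.some.injEq] at hu hv <;>
    simp only [glue_lt_inl_inl, glue_lt_inl_inr, glue_lt_inr_inl, glue_lt_inr_inr,
      hu, hv, Option.some.injEq, exists_eq_left']
  · obtain ⟨hx, -⟩ := (m.partner_eq_some_iff).1 hu
    obtain ⟨hx', -⟩ := (m.partner_eq_some_iff).1 hv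
    exact or_iff_right (hP ⟨_, hx⟩ ⟨_, hx'⟩)
  · simp [((m.partner_eq_some_iff).1 hu).1]

lemma glue_lab_of_glueQOf {u : (glue P Q m).carrier} {y : Q.carrier}
    (hu : glueQOf P Q m u = some y) : (glue P Q m).lab u = Q.lab y := by
  induction u using glue_cases with
  | inl x =>
    obtain ⟨hx, rfl⟩ := (m.partner_eq_some_iff).1 hu
    exact (m.lab_eq ⟨x, hx⟩).symm
  | inr y' => cases Option.some.inj hu; rfl

noncomputable def glueSrcEquiv : {x // x ∈ P.S} ≃ {u // u ∈ (glue P Q m).S} :=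
  Equiv.ofBijective (fun x => ⟨glueInl m x, (mem_glue_S_inl m x).2 x.2⟩) <| by
    refine ⟨fun x x' h => Subtype.ext (glueInl_injective m (congrArg Subtype.val h)), ?_⟩
    rintro ⟨u, hu⟩
    induction u using glue_cases with
    | inl x => exact ⟨⟨x, (mem_glue_S_inl m x).1 hu⟩, rfl⟩
    | inr y => exact absurd hu (not_mem_glue_S_inr m y)

lemma glueSrcEquiv_apply (x : {x // x ∈ P.S}) : (glueSrcEquiv m x).1 = glueInl m x.1 := rfl

lemma glueSrcEquiv_symm_apply (u : {u // u ∈ (glue P Q m).S}) :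
    glueInl m ((glueSrcEquiv m).symm u).1 = u.1 := by
  rw [← glueSrcEquiv_apply, Equiv.apply_symm_apply]

noncomputable def glueTgtEquiv : {y // y ∈ Q.T} ≃ {u // u ∈ (glue P Q m).T} :=
  Equiv.ofBijective
    (fun y => ⟨glueInclRight m y, y.1, glueQOf_glueInclRight m y, y.2⟩) <| by
    refine ⟨fun y y' h => Subtype.ext ?_, ?_⟩
    · have h' : glueInclRight m y.1 = glueInclRight m y'.1 := congrArg Subtype.val h
      have := glueQOf_glueInclRight m y.1
      rwa [h', glueQOf_glueInclRight, Option.some.injEq, eq_comm] at this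
    · rintro ⟨u, y, hu, hy⟩
      exact ⟨⟨y, hy⟩, Subtype.ext (eq_of_glueQOf_eq m (glueQOf_glueInclRight m y) hu)⟩

lemma glueQOf_glueTgtEquiv (y : {y // y ∈ Q.T}) :
    glueQOf P Q m (glueTgtEquiv m y).1 = some y.1 :=
  glueQOf_glueInclRight m y.1

lemma glueQOf_glueTgtEquiv_symm (u : {u // u ∈ (glue P Q m).T}) :
    glueQOf P Q m u.1 = some ((glueTgtEquiv m).symm u).1 := by
  conv_lhs => rw [← (glueTgtEquiv m).apply_symm_apply u]
  exact glueQOf_glueTgtEquiv m _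

lemma srcIface_iso_srcIface_glue (hQ : Discrete Q.srcIface) :
    Iso P.srcIface (glue P Q m).srcIface := by
  refine ⟨glueSrcEquiv m, fun x x' => ?_, fun x x' => ?_, fun _ => .rfl, fun _ => .rfl,
    fun _ => rfl⟩
  · change P.lt x.1 x'.1 ↔ (glue P Q m).lt (glueInl m x.1) (glueInl m x'.1)
    rw [glue_lt_inl_inl]
    refine (or_iff_left ?_).symm
    rintro ⟨z, hz, z', hz', h⟩
    exact hQ ⟨z, m.mem_S_of_partner_eq_some hz⟩ ⟨z', m.mem_S_of_partner_eq_some hz'⟩ h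
  · exact (glue_evord_inl_inl m x.1 x'.1).symm

lemma tgtIface_iso_tgtIface_glue (hP : Discrete P.tgtIface) :
    Iso Q.tgtIface (glue P Q m).tgtIface :=
  ⟨glueTgtEquiv m,
    fun y y' => (glue_lt_of_glueQOf m hP (glueQOf_glueTgtEquiv m y)
      (glueQOf_glueTgtEquiv m y')).symm,
    fun y y' => (glue_evord_of_glueQOf m (glueQOf_glueTgtEquiv m y)
      (glueQOf_glueTgtEquiv m y')).symm,
    fun _ => .rfl, fun _ => .rfl, fun y => glue_lab_of_glueQOf m (glueQOf_glueTgtEquiv m y)⟩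

end GlueInterfaces

/-! ### Associativity of gluing -/

section Assoc

variable {a X Q : PreIpomset σ}

namespace Matching

noncomputable def glueRight (m1 : Matching a X) (mq : Matching X Q) :
    Matching a (glue X Q mq) where
  g := m1.g.trans (glueSrcEquiv mq)
  evord_iff t t' := (m1.evord_iff t t').trans (glue_evord_inl_inl mq _ _).symm
  lab_eq t := m1.lab_eq t

noncomputable def unglueRight {mq : Matching X Q} (m : Matching a (glue X Q mq)) :
    Matching a X where
  g := m.g.trans (glueSrcEquiv mq).symm
  evord_iff t t' := by
    rw [m.evord_iff, ← glueSrcEquiv_symm_apply mq (m.g t),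
      ← glueSrcEquiv_symm_apply mq (m.g t'), glue_evord_inl_inl]
    rfl
  lab_eq t := by
    rw [← m.lab_eq t, ← glueSrcEquiv_symm_apply mq (m.g t)]
    rfl

lemma glueRight_unglueRight {mq : Matching X Q} (m : Matching a (glue X Q mq)) :
    glueRight (unglueRight m) mq = m :=
  Matching.ext _ fun t => by simp [glueRight, unglueRight]

noncomputable def glueLeft (m1 : Matching a X) (mq : Matching X Q) :
    Matching (glue a X m1) Q where
  g := (glueTgtEquiv m1).symm.trans mq.g
  evord_iff w w' := (glue_evord_of_glueQOf m1 (glueQOf_glueTgtEquiv_symm m1 w)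
    (glueQOf_glueTgtEquiv_symm m1 w')).trans (mq.evord_iff _ _)
  lab_eq w := (mq.lab_eq _).trans (glue_lab_of_glueQOf m1 (glueQOf_glueTgtEquiv_symm m1 w)).symm

noncomputable def unglueLeft {m1 : Matching a X} (m2 : Matching (glue a X m1) Q) :
    Matching X Q where
  g := (glueTgtEquiv m1).trans m2.g
  evord_iff y y' := (glue_evord_of_glueQOf m1 (glueQOf_glueTgtEquiv m1 y)
    (glueQOf_glueTgtEquiv m1 y')).symm.trans (m2.evord_iff _ _)
  lab_eq y := (m2.lab_eq _).trans (glue_lab_of_glueQOf m1 (glueQOf_glueTgtEquiv m1 y))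

lemma glueLeft_unglueLeft {m1 : Matching a X} (m2 : Matching (glue a X m1) Q) :
    glueLeft m1 (unglueLeft m2) = m2 :=
  Matching.ext _ fun w => by simp [glueLeft, unglueLeft]

lemma partner_glueRight (m1 : Matching a X) (mq : Matching X Q) (t : a.carrier) :
    (m1.glueRight mq).partner t = (m1.partner t).map (glueInl mq) := by
  by_cases ht : t ∈ a.T
  · rw [partner_of_mem _ ht, partner_of_mem _ ht]
    rfl
  · rw [partner_of_not_mem _ ht, partner_of_not_mem _ ht]
    rfl

lemma partner_glueLeft (m1 : Matching a X) (mq : Matching X Q) (w : (glue a X m1).carrier) :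
    (m1.glueLeft mq).partner w = (glueQOf a X m1 w).bind mq.partner := by
  by_cases hw : w ∈ (glue a X m1).T
  · rw [partner_of_mem _ hw, glueQOf_glueTgtEquiv_symm m1 ⟨w, hw⟩, Option.bind_some,
      partner_of_mem _ ((glueTgtEquiv m1).symm ⟨w, hw⟩).2]
    rfl
  · rw [partner_of_not_mem _ hw]
    cases h : glueQOf a X m1 w with
    | none => rfl
    | some y => rw [Option.bind_some, partner_of_not_mem _ fun hy => hw ⟨y, h, hy⟩]

end Matching

@[elab_as_elim]
lemma glue_glue_cases (mq : Matching X Q) (m : Matching a (glue X Q mq))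
    {motive : (glue a (glue X Q mq) m).carrier → Prop} (left : ∀ t, motive (glueInl m t))
    (mid : ∀ x hx, motive (glueInr m ⟨glueInl mq x, hx⟩))
    (right : ∀ q hq, motive (glueInr m ⟨glueInr mq q, hq⟩)) (u) : motive u := by
  induction u using glue_cases with
  | inl t => exact left t
  | inr w =>
    obtain ⟨w, hw⟩ := w
    induction w using glue_cases with
    | inl x => exact mid x hw
    | inr q => exact right q hw

def glueAssocEquiv (m1 : Matching a X) (mq : Matching X Q) (m : Matching a (glue X Q mq))
    (m2 : Matching (glue a X m1) Q) :
    (glue a (glue X Q mq) m).carrier ≃ (glue (glue a X m1) Q m2).carrier where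
  toFun
    | .inl t => .inl (.inl t)
    | .inr ⟨.inl x, hx⟩ => .inl (.inr ⟨x, fun h => hx ⟨x, rfl, h⟩⟩)
    | .inr ⟨.inr q, _⟩ => .inr q
  invFun
    | .inl (.inl t) => .inl t
    | .inl (.inr ⟨x, hx⟩) => .inr ⟨.inl x, fun ⟨_, h, hS⟩ => hx (by cases h; exact hS)⟩
    | .inr q => .inr ⟨.inr q, fun ⟨_, h, _⟩ => by cases h⟩
  left_inv := by rintro (t | ⟨x | q, hz⟩) <;> rfl
  right_inv := by rintro ((t | ⟨x, hx⟩) | q) <;> rfl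

section
variable (m1 : Matching a X) (mq : Matching X Q) (m : Matching a (glue X Q mq))
  (m2 : Matching (glue a X m1) Q)

lemma glueAssocEquiv_left (t : a.carrier) :
    glueAssocEquiv m1 mq m m2 (glueInl m t) = glueInl m2 (glueInl m1 t) := rfl

lemma glueAssocEquiv_mid (x : X.carrier) (hx) :
    glueAssocEquiv m1 mq m m2 (glueInr m ⟨glueInl mq x, hx⟩) =
      glueInl m2 (glueInr m1 ⟨x, fun h => hx ((mem_glue_S_inl mq x).2 h)⟩) := rfl

lemma glueAssocEquiv_right (q) (hq) :
    glueAssocEquiv m1 mq m m2 (glueInr m ⟨glueInr mq q, hq⟩) = glueInr m2 q := rfl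

end

lemma glue_assoc (m1 : Matching a X) (mq : Matching X Q) :
    Iso (glue a (glue X Q mq) (m1.glueRight mq)) (glue (glue a X m1) Q (m1.glueLeft mq)) := by
  refine ⟨glueAssocEquiv m1 mq _ _, fun u v => ?_, fun u v => ?_, fun u => ?_, fun u => ?_,
    fun u => ?_⟩
  all_goals
    induction u using glue_glue_cases <;> try induction v using glue_glue_cases
  all_goals
    simp only [glueAssocEquiv_left, glueAssocEquiv_mid, glueAssocEquiv_right,
      glue_lt_inl_inl, glue_lt_inl_inr, glue_lt_inr_inl, glue_lt_inr_inr,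
      glue_evord_inl_inl, glue_evord_inl_inr, glue_evord_inr_inl, glue_evord_inr_inr,
      mem_glue_S_inl, not_mem_glue_S_inr, mem_glue_T_inl, mem_glue_T_inr, glue_lab_inl,
      glue_lab_inr, Matching.partner_glueRight, Matching.partner_glueLeft, glueQOf_glueInl,
      glueQOf_glueInr, Option.bind_some, Option.map_eq_some_iff, Option.bind_eq_some_iff,
      exists_exists_and_eq_and]
  -- The two sides now differ only in how they refer to partners in `X` and `Q`; they agree once
  -- it is decided which of the events involved lie in the target interfaces.
  all_goals
    simp only [Matching.partner]
    split_ifs <;> simp_all [or_assoc]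

lemma GlueRel.reassoc_right {a X P Q R : PreIpomset σ} (h1 : GlueRel a X P)
    (h2 : GlueRel P Q R) : ∃ Z, GlueRel X Q Z ∧ GlueRel a Z R := by
  obtain ⟨m1, e1⟩ := h1
  obtain ⟨m2, e2⟩ := h2.congr_left e1
  refine ⟨_, ⟨Matching.unglueLeft m2, Iso.refl _⟩, m1.glueRight _, (glue_assoc m1 _).trans ?_⟩
  rwa [Matching.glueLeft_unglueLeft]

lemma GlueRel.reassoc_left {a X Q Z R : PreIpomset σ} (h1 : GlueRel X Q Z)
    (h2 : GlueRel a Z R) : ∃ P, GlueRel a X P ∧ GlueRel P Q R := by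
  obtain ⟨mq, e1⟩ := h1
  obtain ⟨m, e2⟩ := h2.congr_right e1
  refine ⟨_, ⟨Matching.unglueRight m, Iso.refl _⟩, (Matching.unglueRight m).glueLeft mq,
    (glue_assoc _ mq).symm.trans ?_⟩
  rwa [Matching.glueRight_unglueRight]

end Assoc

end PreIpomset

/-! ### Languages and automata -/

open PreIpomset

section Languages

variable {σ : Type}

lemma subset_plusLang (L : Set (PreIpomset σ)) : L ⊆ plusLang L :=
  fun _ hP => Set.mem_iUnion.2 ⟨0, hP⟩

lemma glue_mem_plusLang {L : Set (PreIpomset σ)} {P Q R : PreIpomset σ} (hP : P ∈ L)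
    (hQ : Q ∈ plusLang L) (h : GlueRel P Q R) : R ∈ plusLang L :=
  let ⟨n, hn⟩ := Set.mem_iUnion.1 hQ
  Set.mem_iUnion.2 ⟨n + 1, P, hP, Q, hn, h⟩

lemma plusLang_subset {L M : Set (PreIpomset σ)} (hL : L ⊆ M)
    (hM : ∀ P ∈ L, ∀ Q ∈ M, ∀ R, GlueRel P Q R → R ∈ M) : plusLang L ⊆ M := by
  refine Set.iUnion_subset fun n => ?_
  induction n with
  | zero => exact hL
  | succ n ih => exact fun R ⟨P, hP, Q, hQ, h⟩ => hM P hP Q (ih hQ) R h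

end Languages

namespace PAutomaton

variable {σ : Type}

section Paths

variable {A : PAutomaton σ}

def Path.append : {p r z : A.Q} → Path A p r → Path A r z → Path A p z
  | _, _, _, .nil _, β => β
  | _, _, _, .cons e rest, β => .cons e (rest.append β)

lemma Rec.iso {p r : A.Q} {α : Path A p r} {R R' : PreIpomset σ} (h : Rec α R)
    (hi : Iso R R') : Rec α R' := by
  induction h with
  | nil q R0 h0 => exact .nil q R' (h0.trans hi)
  | cons e rest _ hge => exact .cons e rest ‹_› (hge.iso_right hi)

lemma mem_lang_of_iso {P R : PreIpomset σ} (hP : P ∈ A.lang) (hi : Iso P R) : R ∈ A.lang :=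
  let ⟨p, r, α, hp, hr, hα⟩ := hP
  ⟨p, r, α, hp, hr, hα.iso hi⟩

/-- `γ` is only required to recognize the gluings `id_{μ(r)} * Q`: this is what a path starting
with an added transition of `𝒜⁺` provides, and it spares proving that identities are units. -/
lemma Rec.append {p r z : A.Q} {α : Path A p r} {γ : Path A r z} {P Q R : PreIpomset σ}
    (hα : Rec α P) (hγ : ∀ R', GlueRel (A.mu r).idOf Q R' → Rec γ R')
    (h : GlueRel P Q R) : Rec (α.append γ) R := by
  induction hα generalizing R with
  | nil q P hP => exact hγ R (h.congr_left hP)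
  | cons e rest _ hge ih =>
    obtain ⟨Z, hZ, hZR⟩ := hge.reassoc_right h
    exact .cons e _ (ih hγ hZ) hZR

lemma Rec.ifaces (hA : A.IsPA) {p r : A.Q} {α : Path A p r} {R : PreIpomset σ} (h : Rec α R) :
    Iso R.srcIface (A.mu p) ∧ Iso R.tgtIface (A.mu r) := by
  induction h with
  | nil q R h0 =>
    exact ⟨h0.srcIface_congr.symm.trans (hA.2.2.1 q).iso_srcIface_idOf,
      h0.tgtIface_congr.symm.trans (hA.2.2.1 q).iso_tgtIface_idOf⟩
  | cons e rest _ hge ih =>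
    obtain ⟨m, hm⟩ := hge
    have hdisc := (hA.2.2.1 (A.tgt e)).2.1
    exact ⟨hm.srcIface_congr.symm.trans ((srcIface_iso_srcIface_glue m
        (Discrete.of_iso ih.1 hdisc)).symm.trans (hA.2.2.2.2.1 e)),
      hm.tgtIface_congr.symm.trans ((tgtIface_iso_tgtIface_glue m
        (Discrete.of_iso (hA.2.2.2.2.2 e) hdisc)).symm.trans ih.2)⟩

lemma iso_mu_of_glueRel (hA : A.IsPA) {p r p' z : A.Q} {α : Path A p r} {β : Path A p' z}
    {P Q R : PreIpomset σ} (hα : Rec α P) (hβ : Rec β Q) (h : GlueRel P Q R) :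
    Iso (A.mu r) (A.mu p') := by
  obtain ⟨m, -⟩ := h
  have hP := (hα.ifaces hA).2
  have hQ := (hβ.ifaces hA).1
  exact hP.symm.trans ((m.iso_tgtIface_srcIface (Discrete.of_iso hP (hA.2.2.1 r).2.1)
    (Discrete.of_iso hQ (hA.2.2.1 p').2.1)).trans hQ)

end Paths

section Plus

variable {A : PAutomaton σ}

def Path.lift : {p r : A.Q} → Path A p r → Path A.plusAut p r
  | _, _, .nil q => .nil (A := A.plusAut) q
  | _, _, .cons e rest => .cons (A := A.plusAut) (Sum.inl e) rest.lift

lemma Rec.lift {p r : A.Q} {α : Path A p r} {R : PreIpomset σ} (h : Rec α R) :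
    Rec α.lift R := by
  induction h with
  | nil q R h0 => exact .nil (A := A.plusAut) q R h0
  | cons e rest _ hge ih => exact .cons (A := A.plusAut) (Sum.inl e) rest.lift ih hge

lemma mem_plusLang_lang {P R : PreIpomset σ} (hP : P ∈ A.lang)
    (h : Iso P R ∨ ∃ Q ∈ plusLang A.lang, GlueRel P Q R) : R ∈ plusLang A.lang := by
  rcases h with h | ⟨Q, hQ, h⟩
  · exact subset_plusLang _ (mem_lang_of_iso hP h)
  · exact glue_mem_plusLang hP hQ h

lemma plusAut_isPA (hA : A.IsPA) : A.plusAut.IsPA := by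
  obtain ⟨hQ, hE, hmu, hlab, hsrc, htgt⟩ := hA
  refine ⟨hQ, ?_, hmu, ?_, ?_, ?_⟩
  · change Finite (A.E ⊕ _)
    infer_instance
  · rintro (e | c)
    exacts [hlab e, (hmu c.1.1).idOf_isIpomset]
  · rintro (e | c)
    exacts [hsrc e, (hmu c.1.1).iso_srcIface_idOf]
  · rintro (e | c)
    exacts [htgt e, (hmu c.1.1).iso_tgtIface_idOf.trans c.2.2.2]

lemma plusAut_isGST (hA : A.IsPA) (hg : A.IsGST) : A.plusAut.IsGST := by
  rintro (e | c)
  exacts [hg e, (hA.2.2.1 c.1.1).2.1]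

lemma glue_mem_lang_plusAut (hA : A.IsPA) {P Q R : PreIpomset σ} (hP : P ∈ A.lang)
    (hQ : Q ∈ A.plusAut.lang) (h : GlueRel P Q R) : R ∈ A.plusAut.lang := by
  obtain ⟨p, r, α, hp, hr, hα⟩ := hP
  obtain ⟨p', z, β, hp', hz, hβ⟩ := hQ
  let c : A.plusAut.E :=
    Sum.inr ⟨(r, p'), hr, hp', iso_mu_of_glueRel (plusAut_isPA hA) hα.lift hβ h⟩
  exact ⟨p, z, α.lift.append (.cons c β), hp, hz,
    hα.lift.append (fun R' h' => .cons c β hβ h') h⟩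

/-- Cutting a path of `𝒜⁺` that ends in an accepting state at its first added transition. -/
lemma exists_rec_of_rec_plusAut {p r : A.plusAut.Q} {α : Path A.plusAut p r} {R : PreIpomset σ}
    (h : Rec α R) (hr : r ∈ A.accept) :
    ∃ r' ∈ A.accept, ∃ α' : Path A p r', ∃ P, Rec α' P ∧
      (Iso P R ∨ ∃ Q ∈ plusLang A.lang, GlueRel P Q R) := by
  induction h with
  | nil q R h0 => exact ⟨q, hr, .nil (A := A) q, R, .nil (A := A) q R h0, .inl (Iso.refl R)⟩
  | cons e rest _ hge ih =>
    obtain ⟨r', hr', α', P, hP, hPR⟩ := ih hr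
    rcases e with e | c
    · rcases hPR with hPR | ⟨Q, hQ, hPQR⟩
      · exact ⟨r', hr', .cons e α', _, .cons e α' hP (hge.congr_right hPR), .inl (Iso.refl _)⟩
      · obtain ⟨Y, hY, hYR⟩ := hPQR.reassoc_left hge
        exact ⟨r', hr', .cons e α', Y, .cons e α' hP hY, .inr ⟨Q, hQ, hYR⟩⟩
    · exact ⟨c.1.1, c.2.1, .nil _, _, .nil _ _ (Iso.refl _),
        .inr ⟨_, mem_plusLang_lang ⟨_, r', α', c.2.2.1, hr', hP⟩ hPR, hge⟩⟩

end Plus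

end PAutomaton

theorem plus_lang_general {σ : Type} (A : PAutomaton σ)
    (hA : A.IsPA) (hgA : A.IsGST) :
    A.plusAut.IsPA ∧ A.plusAut.IsGST ∧
    A.plusAut.lang = plusLang A.lang := by
  refine ⟨PAutomaton.plusAut_isPA hA, PAutomaton.plusAut_isGST hA hgA, ?_⟩
  refine Set.Subset.antisymm ?_ (plusLang_subset ?_ ?_)
  · rintro R ⟨p, r, α, hp, hr, hα⟩
    obtain ⟨r', hr', α', P, hP, hPR⟩ := PAutomaton.exists_rec_of_rec_plusAut hα hr
    exact PAutomaton.mem_plusLang_lang ⟨p, r', α', hp, hr', hP⟩ hPR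
  · rintro P ⟨p, r, α, hp, hr, hα⟩
    exact ⟨p, r, α.lift, hp, hr, hα.lift⟩
  · exact fun P hP Q hQ R h => PAutomaton.glue_mem_lang_plusAut hA hP hQ h

/-- For a reduced gST-automaton `𝒜`, the automaton `𝒜⁺` is a
gST-automaton with `L(𝒜⁺) = L(𝒜)⁺ = ⋃_{n≥1} L(𝒜)ⁿ`. -/
theorem plus_lang {σ : Type} [Finite σ] (A : PAutomaton σ)
    (hA : A.IsPA) (hgA : A.IsGST) (hrA : A.Reduced) :
    A.plusAut.IsPA ∧ A.plusAut.IsGST ∧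
    A.plusAut.lang = plusLang A.lang :=
  plus_lang_general A hA hgA

end HDA
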